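/- Cauchy–Binet for pseudo-determinants (Theorem 1): Let F and G be complex n×m matrices and let k be the number of nonzero roots, counted with multiplicity, of the characteristic polynomial of the m×m matrix FᵀG. Then the product of these nonzero roots (equal to 1 when k = 0) satisfies Det(FᵀG) = Σ_{(I,J)} det(F_{I,J})·det(G_{I,J}), the sum running over all pairs (I,J) with I a k-element subset of the row indices {1,…,n} and J a k-element subset of the column indices {1,…,m}; when k = 0 the right-hand side is the empty pattern contribution 1. -/

import Mathlib

open Matrix Polynomial

/-- The minor of an `n × m` complex matrix `F` given by a `k`-element set `I` of row indices and
a `k`-element set `J` of column indices. For `k = 0` it equals `1`. -/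
def Matrix.minorOn {n m k : ℕ} (F : Matrix (Fin n) (Fin m) ℂ)
    (I : {s : Finset (Fin n) // s.card = k}) (J : {s : Finset (Fin m) // s.card = k}) : ℂ :=
  (F.submatrix (I.1.orderEmbOfFin I.2) (J.1.orderEmbOfFin J.2)).det

/-- The pseudo-determinant of a square complex matrix: the product of the nonzero roots,
counted with multiplicity, of its characteristic polynomial `det(x·I − A)`; it is `1` when
all eigenvalues are zero. -/
noncomputable def PDet {ι : Type*} [Fintype ι] [DecidableEq ι] (A : Matrix ι ι ℂ) : ℂ :=
  (A.charpoly.roots.filter (· ≠ 0)).prod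

/-!
Comparing two expressions for the coefficient of `x ^ (m - k)` in `charpoly (Fᵀ G)`.
Over `ℂ` the characteristic polynomial is `x ^ (m - k) ∏ (x - λ)` over its `k` nonzero roots,
so this coefficient is `(-1) ^ k Det (Fᵀ G)`. Expanding `det (x I - A)` instead gives
`(-1) ^ k` times the sum of the `k × k` principal minors of `A = Fᵀ G`, and by Cauchy–Binet the
principal minor on columns `J` is `det ((F_{·,J})ᵀ G_{·,J}) = Σ_I det F_{I,J} det G_{I,J}`.
-/

open Finset Equiv

theorem Finset.sum_injective_eq_sum_orderEmbOfFin_comp_perm {κ β : Type*} [Fintype κ]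
    [LinearOrder κ] [AddCommMonoid β] (k : ℕ) (g : (Fin k → κ) → β) :
    ∑ f with Function.Injective f, g f =
      ∑ s : {s : Finset κ // s.card = k}, ∑ σ : Perm (Fin k), g (s.1.orderEmbOfFin s.2 ∘ σ) := by
  rw [← Fintype.sum_prod_type']
  symm
  refine sum_bij (fun p _ => p.1.1.orderEmbOfFin p.1.2 ∘ p.2) ?_ ?_ ?_ fun _ _ => rfl
  · intro p _
    simpa using (p.1.1.orderEmbOfFin p.1.2).injective.comp p.2.injective
  · rintro ⟨s, σ⟩ - ⟨t, τ⟩ - h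
    have hst : s = t := by
      have hrange := congrArg Set.range h
      simp only [Set.range_comp, EquivLike.range_eq_univ, Set.image_univ,
        range_orderEmbOfFin] at hrange
      exact Subtype.ext (coe_injective hrange)
    subst hst
    simp only [Prod.mk.injEq, true_and]
    exact Equiv.ext fun i => (s.1.orderEmbOfFin s.2).injective (congrFun h i)
  · intro f hf
    simp only [mem_filter, mem_univ, true_and] at hf
    have hs : (univ.map ⟨f, hf⟩).card = k := by simp
    have hmem (i : Fin k) : f i ∈ univ.map ⟨f, hf⟩ := by simp
    let g (i : Fin k) : Fin k := ((univ.map ⟨f, hf⟩).orderIsoOfFin hs).symm ⟨f i, hmem i⟩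
    have hg : Function.Injective g := fun i j hij => hf (by simpa [g] using hij)
    refine ⟨(⟨_, hs⟩, Equiv.ofBijective g (Finite.injective_iff_bijective.mp hg)), mem_univ _, ?_⟩
    funext i
    simp [g, ← coe_orderIsoOfFin_apply]

namespace Matrix

variable {R : Type*} [CommRing R]

theorem det_mul_eq_sum_prod_mul_det_submatrix {ι κ : Type*} [Fintype ι] [DecidableEq ι]
    [Fintype κ] (M : Matrix ι κ R) (N : Matrix κ ι R) :
    (M * N).det = ∑ f : ι → κ, (∏ i, M i (f i)) * (N.submatrix f id).det := by
  have h := detRowAlternating.toMultilinearMap.map_sum fun (i : ι) (l : κ) => M i l • N l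
  simp only [MultilinearMap.map_smul_univ, smul_eq_mul] at h
  have hMN : M * N = of fun i => ∑ j, M i j • N j := by
    ext i k
    simp [mul_apply, Finset.sum_apply]
  rw [hMN]
  exact h

theorem det_mul_eq_sum_det_mul_det {κ : Type*} [Fintype κ] [LinearOrder κ] {k : ℕ}
    (M : Matrix (Fin k) κ R) (N : Matrix κ (Fin k) R) :
    (M * N).det = ∑ s : {s : Finset κ // s.card = k},
      (M.submatrix id (s.1.orderEmbOfFin s.2)).det *
        (N.submatrix (s.1.orderEmbOfFin s.2) id).det := by
  have hvanish (f : Fin k → κ) (hf : ¬Function.Injective f) : (N.submatrix f id).det = 0 :=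
    detRowAlternating.map_eq_zero_of_not_injective _ fun h => hf (h.of_comp (f := N))
  have hperm (s : {s : Finset κ // s.card = k}) (σ : Perm (Fin k)) :
      (N.submatrix (s.1.orderEmbOfFin s.2 ∘ σ) id).det =
        Perm.sign σ * (N.submatrix (s.1.orderEmbOfFin s.2) id).det := by
    rw [← det_permute]
    rfl
  have hdetM (s : {s : Finset κ // s.card = k}) : (M.submatrix id (s.1.orderEmbOfFin s.2)).det =
      ∑ σ : Perm (Fin k), Perm.sign σ * ∏ i, M i (s.1.orderEmbOfFin s.2 (σ i)) := by
    rw [← det_transpose, det_apply]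
    simp [Units.smul_def]
  calc (M * N).det
      = ∑ f : Fin k → κ, (∏ i, M i (f i)) * (N.submatrix f id).det :=
        det_mul_eq_sum_prod_mul_det_submatrix M N
    _ = ∑ f with Function.Injective f, (∏ i, M i (f i)) * (N.submatrix f id).det := by
        refine (sum_filter_of_ne fun f _ hf => ?_).symm
        by_contra hinj
        simp [hvanish f hinj] at hf
    _ = ∑ s : {s : Finset κ // s.card = k}, ∑ σ : Perm (Fin k),
          (∏ i, M i (s.1.orderEmbOfFin s.2 (σ i))) *
            (N.submatrix (s.1.orderEmbOfFin s.2 ∘ σ) id).det :=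
        sum_injective_eq_sum_orderEmbOfFin_comp_perm k _
    _ = _ := by
        simp only [hperm, hdetM, sum_mul]
        exact sum_congr rfl fun s _ => sum_congr rfl fun σ _ => by ring

theorem det_submatrix_val_eq_det_submatrix_orderEmbOfFin {κ : Type*} [LinearOrder κ]
    (A : Matrix κ κ R) (s : Finset κ) {k : ℕ} (hs : s.card = k) :
    (A.submatrix (Subtype.val : s → κ) Subtype.val).det =
      (A.submatrix (s.orderEmbOfFin hs) (s.orderEmbOfFin hs)).det := by
  rw [← det_submatrix_equiv_self (s.orderIsoOfFin hs).toEquiv]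
  rfl

theorem charpoly_coeff_eq_sum_det_submatrix_orderEmbOfFin {κ : Type*} [Fintype κ]
    [LinearOrder κ] (A : Matrix κ κ R) {k : ℕ} (hk : k ≤ Fintype.card κ) :
    A.charpoly.coeff (Fintype.card κ - k) = (-1) ^ k * ∑ s : {s : Finset κ // s.card = k},
      (A.submatrix (s.1.orderEmbOfFin s.2) (s.1.orderEmbOfFin s.2)).det := by
  have hmem (s : Finset κ) : s ∈ univ.powersetCard k ↔ s.card = k := by simp [mem_powersetCard]
  rw [charpoly_coeff_eq_sum_minors A k hk, sum_subtype _ hmem]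
  exact congrArg _ (sum_congr rfl fun s _ =>
    det_submatrix_val_eq_det_submatrix_orderEmbOfFin A s.1 s.2)

end Matrix

theorem Polynomial.coeff_natDegree_sub_card_filter_roots_ne_zero {R : Type*} [CommRing R]
    [IsDomain R] [DecidableEq R] {p : R[X]} (hp : p.Monic)
    (hroots : Multiset.card p.roots = p.natDegree) :
    p.coeff (p.natDegree - Multiset.card (p.roots.filter (· ≠ 0))) =
      (-1) ^ Multiset.card (p.roots.filter (· ≠ 0)) * (p.roots.filter (· ≠ 0)).prod := by
  set s := p.roots.filter (· ≠ 0)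
  set j := p.roots.count 0
  have hsplit : p.roots = s + Multiset.replicate j 0 := by
    rw [add_comm, ← Multiset.filter_eq']
    exact (Multiset.filter_add_not _ _).symm
  have hj : p.natDegree - Multiset.card s = j := by
    rw [← hroots, hsplit, Multiset.card_add, Multiset.card_replicate]
    omega
  have hfactor : p = (s.map fun a => X - C a).prod * X ^ j := by
    conv_lhs => rw [← prod_multiset_X_sub_C_of_monic_of_roots_card_eq hp hroots, hsplit]
    simp
  calc p.coeff (p.natDegree - Multiset.card s)
      = ((s.map fun a => X - C a).prod * X ^ j).coeff (0 + j) := by rw [hj, zero_add, ← hfactor]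
    _ = ((s.map fun a => X - C a).prod).eval 0 := by rw [coeff_mul_X_pow, coeff_zero_eq_eval_zero]
    _ = (-1) ^ Multiset.card s * s.prod := by simp [eval_multiset_prod, Multiset.prod_map_neg]

/-- Cauchy–Binet for pseudo-determinants: if `F, G` are complex `n × m` matrices and `k` is the
number of nonzero roots (with multiplicity) of the characteristic polynomial of `Fᵀ G`, then
`Det(Fᵀ G) = Σ_{(I,J)} det(F_{I,J}) det(G_{I,J})`, the sum over all pairs of `k`-element subsets
`I` of rows and `J` of columns; for `k = 0` the right-hand side is `1`. -/
theorem pdet_cauchy_binet {n m : ℕ} (F G : Matrix (Fin n) (Fin m) ℂ) (k : ℕ)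
    (hk : k = Multiset.card ((Fᵀ * G).charpoly.roots.filter (· ≠ 0))) :
    PDet (Fᵀ * G) =
      ∑ I : {s : Finset (Fin n) // s.card = k}, ∑ J : {s : Finset (Fin m) // s.card = k},
        F.minorOn I J * G.minorOn I J := by
  set A := Fᵀ * G
  have hdeg : A.charpoly.natDegree = m := by rw [charpoly_natDegree_eq_dim, Fintype.card_fin]
  have hkm : k ≤ m :=
    hk ▸ ((Multiset.card_le_card (Multiset.filter_le _ _)).trans (card_roots' _)).trans_eq hdeg
  have hcoeff_pdet : A.charpoly.coeff (m - k) = (-1) ^ k * PDet A := by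
    have h := coeff_natDegree_sub_card_filter_roots_ne_zero A.charpoly_monic
      IsAlgClosed.card_roots_eq_natDegree
    rwa [hdeg, ← hk] at h
  have hcoeff_minors : A.charpoly.coeff (m - k) =
      (-1) ^ k * ∑ J : {s : Finset (Fin m) // s.card = k},
        (A.submatrix (J.1.orderEmbOfFin J.2) (J.1.orderEmbOfFin J.2)).det := by
    simpa using A.charpoly_coeff_eq_sum_det_submatrix_orderEmbOfFin (k := k) (by simpa using hkm)
  have hminor (J : {s : Finset (Fin m) // s.card = k}) :
      (A.submatrix (J.1.orderEmbOfFin J.2) (J.1.orderEmbOfFin J.2)).det =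
        ∑ I : {s : Finset (Fin n) // s.card = k}, F.minorOn I J * G.minorOn I J := by
    rw [submatrix_mul _ _ _ id _ Function.bijective_id, ← transpose_submatrix,
      det_mul_eq_sum_det_mul_det]
    refine sum_congr rfl fun I _ => ?_
    rw [← det_transpose]
    rfl
  rw [sum_comm, ← sum_congr rfl fun J _ => hminor J]
  exact mul_left_cancel₀ (pow_ne_zero k (neg_ne_zero.2 one_ne_zero))
    (hcoeff_pdet.symm.trans hcoeff_minors)
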